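/- arXiv:2204.08591 — 2 statements merged into one kernel-verified Lean document; each statement's English description precedes it below -/
import Mathlib

section
/- (Pointwise associative calibration inequality, proved in Section 2.2.1) For any orthonormal vectors x, y, z ∈ ℝ⁷ one has |φ(x,y,z)| ≤ 1, with equality if and only if x×y = z or x×y = −z. -/
open scoped RealInnerProductSpace

noncomputable section

abbrev E7 : Type := EuclideanSpace ℝ (Fin 7)

/-- The standard orthonormal basis vectors of ℝ⁷. -/
def e7 (i : Fin 7) : E7 := EuclideanSpace.single i 1

/-- Kronecker delta. -/
def kd7 (i j : Fin 7) : ℝ := if i = j then 1 else 0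

/-- `e^{abc}(e_i, e_j, e_k)` : component of a wedge of three dual basis covectors. -/
def trip7 (a b c i j k : Fin 7) : ℝ :=
  Matrix.det !![kd7 a i, kd7 a j, kd7 a k;
                kd7 b i, kd7 b j, kd7 b k;
                kd7 c i, kd7 c j, kd7 c k]

/-- `e^{abcd}(e_i, e_j, e_k, e_l)` : component of a wedge of four dual basis covectors. -/
def quad7 (a b c d i j k l : Fin 7) : ℝ :=
  Matrix.det !![kd7 a i, kd7 a j, kd7 a k, kd7 a l;
                kd7 b i, kd7 b j, kd7 b k, kd7 b l;
                kd7 c i, kd7 c j, kd7 c k, kd7 c l;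
                kd7 d i, kd7 d j, kd7 d k, kd7 d l]

/-- Components `φ_{ijk}` of the standard G₂ 3-form
`φ = e¹²³ + e¹⁴⁵ − e¹⁶⁷ + e²⁴⁶ − e²⁷⁵ + e³⁴⁷ − e³⁵⁶` (indices shifted to be 0-based). -/
def phiC (i j k : Fin 7) : ℝ :=
  trip7 0 1 2 i j k + trip7 0 3 4 i j k - trip7 0 5 6 i j k
  + trip7 1 3 5 i j k - trip7 1 6 4 i j k + trip7 2 3 6 i j k - trip7 2 4 5 i j k

/-- Components `ψ_{ijkl}` of the Hodge dual 4-form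
`ψ = e⁴⁵⁶⁷ − e²³⁴⁵ + e²³⁶⁷ − e³¹⁴⁶ + e³¹⁷⁵ − e¹²⁴⁷ + e¹²⁵⁶` (0-based). -/
def psiC (i j k l : Fin 7) : ℝ :=
  quad7 3 4 5 6 i j k l - quad7 1 2 3 4 i j k l + quad7 1 2 5 6 i j k l
  - quad7 2 0 3 5 i j k l + quad7 2 0 6 4 i j k l
  - quad7 0 1 3 6 i j k l + quad7 0 1 4 5 i j k l

/-- The standard G₂ 3-form evaluated on arbitrary vectors. -/
def phi7 (x y z : E7) : ℝ := ∑ i, ∑ j, ∑ k, x i * y j * z k * phiC i j k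

/-- The 4-form ψ evaluated on arbitrary vectors. -/
def psi7 (x y z w : E7) : ℝ :=
  ∑ i, ∑ j, ∑ k, ∑ l, x i * y j * z k * w l * psiC i j k l

/-- The cross product on ℝ⁷, characterized by `⟨x × y, z⟩ = φ(x,y,z)`. -/
def cross7 (x y : E7) : E7 := (WithLp.equiv 2 (Fin 7 → ℝ)).symm fun k => phi7 x y (e7 k)

/-- The vector-valued 3-form χ, characterized by `⟨χ(x,y,z), w⟩ = ψ(x,y,z,w)`. -/
def chi7 (x y z : E7) : E7 := (WithLp.equiv 2 (Fin 7 → ℝ)).symm fun l => psi7 x y z (e7 l)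

/-! The identity `⟪x × y, z⟫ = φ(x, y, z)` turns the calibration inequality into Cauchy–Schwarz
for `x × y` and `z`. In coordinates one checks `‖x × y‖² = ‖x‖²‖y‖² - ⟪x, y⟫²`, so `x × y` is a
unit vector when `x, y` are orthonormal, and the equality case of Cauchy–Schwarz for unit
vectors is `x × y = ±z`. -/

open Finset

theorem abs_real_inner_eq_one_iff_of_norm_eq_one {F : Type*} [NormedAddCommGroup F]
    [InnerProductSpace ℝ F] {u v : F} (hu : ‖u‖ = 1) (hv : ‖v‖ = 1) :
    |⟪u, v⟫| = 1 ↔ u = v ∨ u = -v := by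
  rw [abs_eq zero_le_one, inner_eq_one_iff_of_norm_eq_one hu hv,
    inner_eq_neg_one_iff_of_norm_eq_one hu hv]

lemma e7_apply (i j : Fin 7) : e7 i j = kd7 j i := by
  simp [e7, kd7]

lemma cross7_apply (x y : E7) (k : Fin 7) : cross7 x y k = phi7 x y (e7 k) := rfl

lemma phi7_e7 (x y : E7) (k : Fin 7) :
    phi7 x y (e7 k) = ∑ i, ∑ j, x i * y j * phiC i j k := by
  simp [phi7, e7_apply, kd7]

lemma phi7_eq_sum_phi7_e7_mul (x y z : E7) : phi7 x y z = ∑ k, phi7 x y (e7 k) * z k := by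
  simp only [phi7_e7, sum_mul]
  rw [sum_comm]
  refine sum_congr rfl fun i _ => ?_
  rw [sum_comm]
  exact sum_congr rfl fun j _ => sum_congr rfl fun k _ => by ring

theorem inner_cross7_left (x y z : E7) : ⟪cross7 x y, z⟫ = phi7 x y z := by
  rw [phi7_eq_sum_phi7_e7_mul, PiLp.inner_apply]
  simp [cross7_apply, mul_comm]

lemma sum_mul_trip7 (x y z : E7) (a b c : Fin 7) :
    ∑ i, ∑ j, ∑ k, x i * y j * z k * trip7 a b c i j k =
      !![x a, y a, z a; x b, y b, z b; x c, y c, z c].det := by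
  simp only [trip7, kd7, Matrix.det_fin_three, Matrix.of_apply, Matrix.cons_val',
    Matrix.cons_val_zero, Matrix.cons_val_fin_one, Matrix.cons_val_one, Matrix.cons_val, mul_ite,
    mul_one, mul_zero, mul_sub, mul_add, sum_sub_distrib, sum_add_distrib, sum_ite_eq, mem_univ,
    ↓reduceIte, sum_ite_irrel, sum_const_zero]
  ring

lemma cross7_eq (x y : E7) : cross7 x y = !₂[
    x 1 * y 2 - x 2 * y 1 + x 3 * y 4 - x 4 * y 3 - x 5 * y 6 + x 6 * y 5,
    x 2 * y 0 - x 0 * y 2 + x 3 * y 5 - x 5 * y 3 + x 4 * y 6 - x 6 * y 4,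
    x 0 * y 1 - x 1 * y 0 + x 3 * y 6 - x 6 * y 3 - x 4 * y 5 + x 5 * y 4,
    x 4 * y 0 - x 0 * y 4 + x 5 * y 1 - x 1 * y 5 + x 6 * y 2 - x 2 * y 6,
    x 0 * y 3 - x 3 * y 0 - x 1 * y 6 + x 6 * y 1 + x 2 * y 5 - x 5 * y 2,
    x 0 * y 6 - x 6 * y 0 + x 1 * y 3 - x 3 * y 1 - x 2 * y 4 + x 4 * y 2,
    x 5 * y 0 - x 0 * y 5 + x 1 * y 4 - x 4 * y 1 + x 2 * y 3 - x 3 * y 2] := by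
  ext k
  simp only [cross7_apply, phi7, phiC, mul_add, mul_sub, sum_add_distrib, sum_sub_distrib,
    sum_mul_trip7]
  fin_cases k <;> simp [Matrix.det_fin_three, e7_apply, kd7] <;> ring

theorem norm_cross7_sq (x y : E7) : ‖cross7 x y‖ ^ 2 = ‖x‖ ^ 2 * ‖y‖ ^ 2 - ⟪x, y⟫ ^ 2 := by
  simp only [cross7_eq, EuclideanSpace.norm_sq_eq, PiLp.inner_apply, Fin.sum_univ_seven,
    Matrix.cons_val_zero, Matrix.cons_val_one, Matrix.cons_val, Real.norm_eq_abs, sq_abs,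
    RCLike.inner_apply, Real.ringHom_apply]
  ring

theorem norm_cross7_of_inner_eq_zero {x y : E7} (hxy : ⟪x, y⟫ = 0) :
    ‖cross7 x y‖ = ‖x‖ * ‖y‖ := by
  have h := norm_cross7_sq x y
  rw [hxy, zero_pow two_ne_zero, sub_zero, ← mul_pow] at h
  exact (pow_left_inj₀ (norm_nonneg _) (by positivity) two_ne_zero).mp h

/-- Pointwise associative calibration inequality: for orthonormal `x, y, z`,
`|φ(x,y,z)| ≤ 1`, with equality iff `x × y = ±z`. -/
theorem assoc_calibration_inequality (x y z : E7) (h : Orthonormal ℝ ![x, y, z]) :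
    |phi7 x y z| ≤ 1 ∧ (|phi7 x y z| = 1 ↔ cross7 x y = z ∨ cross7 x y = -z) := by
  have hx : ‖x‖ = 1 := h.1 0
  have hy : ‖y‖ = 1 := h.1 1
  have hz : ‖z‖ = 1 := h.1 2
  have hxy : ⟪x, y⟫ = 0 := h.2 (by decide : (0 : Fin 3) ≠ 1)
  have hcross : ‖cross7 x y‖ = 1 := by
    rw [norm_cross7_of_inner_eq_zero hxy, hx, hy, one_mul]
  rw [← inner_cross7_left]
  refine ⟨?_, abs_real_inner_eq_one_iff_of_norm_eq_one hcross hz⟩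
  calc |⟪cross7 x y, z⟫| ≤ ‖cross7 x y‖ * ‖z‖ := abs_real_inner_le_norm _ _
    _ = 1 := by rw [hcross, hz, one_mul]
end
end

section
/- (Pointwise form of the remark following equation (2.14)) Let W be a 3-dimensional linear subspace of ℝ⁷. Then W is closed under the cross product (i.e. x×y ∈ W for all x, y ∈ W) if and only if χ(x,y,z) = 0 for all x, y, z ∈ W. -/
open scoped RealInnerProductSpace

noncomputable section

/-!
The coefficients of `φ` and `ψ` satisfy the contraction identity
`ψ_{ijkl} = -∑ₘ φ_{ijm} φ_{mkl} - δ_{jk} δ_{il} + δ_{ik} δ_{jl}`, which says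
`χ(x,y,z) = ⟨x,z⟩y - ⟨y,z⟩x - (x×y)×z`.

If `W` is closed under `×`, this formula puts `χ(x,y,z)` in `W`, so
`‖χ(x,y,z)‖² = ψ(x,y,z,χ(x,y,z))` is an alternating 4-form evaluated on four vectors of a
3-dimensional space, hence zero.

Conversely, for `x, y ∈ W` choose `0 ≠ z ∈ W` orthogonal to `x` and `y`. Then `χ(x,y,z) = 0`
reads `v × z = 0` for `v = x × y`, and `χ(v,z,z) = 0` turns this into `‖z‖² v = ⟨v,z⟩ z`,
so `v ∈ ℝ z ⊆ W`.
-/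

open Module

theorem MultilinearMap.map_perm_of_map_swap_castSucc_succ {R M N : Type*} [Semiring R]
    [AddCommMonoid M] [Module R M] [AddCommGroup N] [Module R N] {n : ℕ}
    (f : MultilinearMap R (fun _ : Fin (n + 1) => M) N)
    (hf : ∀ (v : Fin (n + 1) → M) (i : Fin n), f (v ∘ Equiv.swap i.castSucc i.succ) = -f v)
    (σ : Equiv.Perm (Fin (n + 1))) (v : Fin (n + 1) → M) :
    f (v ∘ σ) = Equiv.Perm.sign σ • f v := by
  have hσ : σ ∈ Submonoid.closure (Set.range fun i : Fin n => Equiv.swap i.castSucc i.succ) := by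
    rw [Equiv.Perm.mclosure_swap_castSucc_succ]; trivial
  induction hσ using Submonoid.closure_induction generalizing v with
  | mem _ h =>
    obtain ⟨i, rfl⟩ := h
    rw [hf, Equiv.Perm.sign_swap Fin.castSucc_lt_succ.ne, Units.neg_smul, one_smul]
  | one => simp
  | mul σ τ _ _ hσ hτ =>
    rw [Equiv.Perm.coe_mul, ← Function.comp_assoc, hτ, hσ, smul_smul, mul_comm, map_mul]

def MultilinearMap.alternatingOfAdjacentSwap {R M N : Type*} [Semiring R]
    [AddCommMonoid M] [Module R M] [AddCommGroup N] [Module R N] [IsAddTorsionFree N] {n : ℕ}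
    (f : MultilinearMap R (fun _ : Fin (n + 1) => M) N)
    (hf : ∀ (v : Fin (n + 1) → M) (i : Fin n), f (v ∘ Equiv.swap i.castSucc i.succ) = -f v) :
    M [⋀^Fin (n + 1)]→ₗ[R] N where
  __ := f
  map_eq_zero_of_eq' v i j hv hij := by
    have hswap : v ∘ Equiv.swap i j = v := funext (Equiv.apply_swap_eq_self hv)
    have h := f.map_perm_of_map_swap_castSucc_succ hf (Equiv.swap i j) v
    rw [hswap, Equiv.Perm.sign_swap hij, Units.neg_smul, one_smul] at h
    exact self_eq_neg.mp h

theorem AlternatingMap.map_eq_zero_of_finrank_lt {K M N ι : Type*} [Field K] [AddCommGroup M]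
    [Module K M] [AddCommGroup N] [Module K N] [Fintype ι] (f : M [⋀^ι]→ₗ[K] N)
    {W : Submodule K M} [FiniteDimensional K W] (hW : finrank K W < Fintype.card ι)
    {v : ι → M} (hv : ∀ i, v i ∈ W) : f v = 0 := by
  refine f.map_linearDependent v fun hli => hW.not_ge ?_
  exact LinearIndependent.fintype_card_le_finrank (b := fun i => (⟨v i, hv i⟩ : W))
    (.of_comp W.subtype hli)

theorem Submodule.exists_ne_zero_forall_inner_eq_zero {𝕜 E ι : Type*} [RCLike 𝕜]
    [NormedAddCommGroup E] [InnerProductSpace 𝕜 E] [Fintype ι] (W : Submodule 𝕜 E)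
    [FiniteDimensional 𝕜 W] (hW : Fintype.card ι < finrank 𝕜 W) (v : ι → E) :
    ∃ z ∈ W, z ≠ 0 ∧ ∀ i, inner 𝕜 (v i) z = 0 := by
  let f : W →ₗ[𝕜] ι → 𝕜 := LinearMap.pi fun i => (innerₛₗ 𝕜 (v i)).comp W.subtype
  obtain ⟨z, hz, hz0⟩ := Submodule.exists_mem_ne_zero_of_ne_bot
    (LinearMap.ker_ne_bot_of_finrank_lt (f := f) (by simpa using hW))
  refine ⟨z, z.2, by simpa using hz0, fun i => ?_⟩
  simpa [f] using congrFun (LinearMap.mem_ker.mp hz) i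

/- Integer copies of the coefficient tensors, with the determinants in `trip7` and `quad7`
expanded, so that the contraction identity can be checked by `decide`. -/

def kd7Int (i j : Fin 7) : ℤ := if i = j then 1 else 0

def trip7Int (a b c i j k : Fin 7) : ℤ :=
  kd7Int a i * (kd7Int b j * kd7Int c k - kd7Int b k * kd7Int c j)
  - kd7Int a j * (kd7Int b i * kd7Int c k - kd7Int b k * kd7Int c i)
  + kd7Int a k * (kd7Int b i * kd7Int c j - kd7Int b j * kd7Int c i)

def quad7Int (a b c d i j k l : Fin 7) : ℤ :=
  kd7Int a i * trip7Int b c d j k l - kd7Int a j * trip7Int b c d i k l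
  + kd7Int a k * trip7Int b c d i j l - kd7Int a l * trip7Int b c d i j k

def phiCInt (i j k : Fin 7) : ℤ :=
  trip7Int 0 1 2 i j k + trip7Int 0 3 4 i j k - trip7Int 0 5 6 i j k
  + trip7Int 1 3 5 i j k - trip7Int 1 6 4 i j k + trip7Int 2 3 6 i j k - trip7Int 2 4 5 i j k

def psiCInt (i j k l : Fin 7) : ℤ :=
  quad7Int 3 4 5 6 i j k l - quad7Int 1 2 3 4 i j k l + quad7Int 1 2 5 6 i j k l
  - quad7Int 2 0 3 5 i j k l + quad7Int 2 0 6 4 i j k l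
  - quad7Int 0 1 3 6 i j k l + quad7Int 0 1 4 5 i j k l

theorem kd7_eq_cast (i j : Fin 7) : kd7 i j = kd7Int i j := by
  simp [kd7, kd7Int, apply_ite (Int.cast : ℤ → ℝ)]

theorem trip7_eq_cast (a b c i j k : Fin 7) : trip7 a b c i j k = trip7Int a b c i j k := by
  simp only [trip7, trip7Int, Matrix.det_fin_three, kd7_eq_cast]
  push_cast
  simp only [Fin.isValue, Matrix.of_apply, Matrix.cons_val', Matrix.cons_val_zero,
    Matrix.cons_val_fin_one, Matrix.cons_val_one, Matrix.cons_val]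
  ring

theorem quad7_eq_cast (a b c d i j k l : Fin 7) :
    quad7 a b c d i j k l = quad7Int a b c d i j k l := by
  simp only [quad7, kd7_eq_cast]
  rw [Matrix.det_succ_row_zero]
  simp only [Nat.succ_eq_add_one, Nat.reduceAdd, Fin.isValue, Matrix.of_apply, Matrix.cons_val',
    Matrix.cons_val_fin_one, Matrix.cons_val_zero, Matrix.det_fin_three, Matrix.submatrix_apply,
    Fin.succ_zero_eq_one, Fin.succAbove, Fin.castSucc_zero, Matrix.cons_val_one,
    Fin.succ_one_eq_two, Fin.castSucc_one, Matrix.cons_val, Fin.reduceSucc, Fin.reduceCastSucc,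
    Fin.sum_univ_four, Fin.coe_ofNat_eq_mod, Nat.zero_mod, pow_zero, one_mul, lt_self_iff_false,
    ↓reduceIte, not_lt_zero, Nat.one_mod, pow_one, neg_mul, zero_lt_one, Fin.lt_one_iff,
    Fin.reduceEq, Nat.reduceMod, even_two, Even.neg_pow, one_pow, Fin.reduceLT, Nat.mod_succ,
    quad7Int, trip7Int, Int.cast_sub, Int.cast_add, Int.cast_mul]
  ring

theorem phiC_eq_cast (i j k : Fin 7) : phiC i j k = phiCInt i j k := by
  simp only [phiC, phiCInt, trip7_eq_cast]; push_cast; ring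

theorem psiC_eq_cast (i j k l : Fin 7) : psiC i j k l = psiCInt i j k l := by
  simp only [psiC, psiCInt, quad7_eq_cast]; push_cast; ring

theorem psiC_swap01 (i j k l : Fin 7) : psiC j i k l = -psiC i j k l := by
  simp only [psiC_eq_cast, psiCInt, quad7Int, trip7Int]; push_cast; ring

theorem psiC_swap12 (i j k l : Fin 7) : psiC i k j l = -psiC i j k l := by
  simp only [psiC_eq_cast, psiCInt, quad7Int, trip7Int]; push_cast; ring

theorem psiC_swap23 (i j k l : Fin 7) : psiC i j l k = -psiC i j k l := by
  simp only [psiC_eq_cast, psiCInt, quad7Int, trip7Int]; push_cast; ring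

theorem psiCInt_eq_contraction : ∀ i j k l : Fin 7, psiCInt i j k l =
    -∑ m, phiCInt i j m * phiCInt m k l - kd7Int j k * kd7Int i l + kd7Int i k * kd7Int j l := by
  decide

theorem psiC_eq_contraction (i j k l : Fin 7) : psiC i j k l =
    -∑ m, phiC i j m * phiC m k l - kd7 j k * kd7 i l + kd7 i k * kd7 j l := by
  simp only [psiC_eq_cast, phiC_eq_cast, kd7_eq_cast, psiCInt_eq_contraction]
  push_cast; rfl

theorem e7_apply_s14 (m k : Fin 7) : e7 m k = if k = m then 1 else 0 := by
  simp [e7]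

theorem cross7_apply_s14 (x y : E7) (m : Fin 7) :
    cross7 x y m = ∑ i, ∑ j, x i * y j * phiC i j m := by
  simp [cross7, phi7, e7_apply_s14]

theorem chi7_apply (x y z : E7) (l : Fin 7) :
    chi7 x y z l = ∑ i, ∑ j, ∑ k, x i * y j * z k * psiC i j k l := by
  simp [chi7, psi7, e7_apply_s14]

theorem E7.inner_eq_sum (x y : E7) : ⟪x, y⟫ = ∑ i, x i * y i := by
  simp [PiLp.inner_apply, mul_comm]

theorem cross7_zero_left (y : E7) : cross7 0 y = 0 := by
  ext m; simp [cross7_apply_s14]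

theorem cross7_cross7_apply (x y z : E7) (l : Fin 7) :
    cross7 (cross7 x y) z l = ∑ i, ∑ j, ∑ k, x i * y j * z k * ∑ m, phiC i j m * phiC m k l := by
  simp only [cross7_apply_s14, Finset.sum_mul, Finset.mul_sum]
  calc _ = ∑ m, ∑ i, ∑ j, ∑ k, x i * y j * phiC i j m * z k * phiC m k l :=
        Finset.sum_congr rfl fun m _ => Finset.sum_comm_cycle.symm
    _ = ∑ i, ∑ j, ∑ m, ∑ k, x i * y j * phiC i j m * z k * phiC m k l :=
        Finset.sum_comm_cycle.symm
    _ = _ := Finset.sum_congr rfl fun i _ => Finset.sum_congr rfl fun j _ => by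
        rw [Finset.sum_comm]
        exact Finset.sum_congr rfl fun k _ => Finset.sum_congr rfl fun m _ => by ring

theorem chi7_eq (x y z : E7) :
    chi7 x y z = ⟪x, z⟫ • y - ⟪y, z⟫ • x - cross7 (cross7 x y) z := by
  ext l
  simp only [chi7_apply, cross7_cross7_apply, psiC_eq_contraction, E7.inner_eq_sum,
    PiLp.sub_apply, PiLp.smul_apply, smul_eq_mul, mul_add, mul_sub, mul_neg, Finset.sum_add_distrib,
    Finset.sum_sub_distrib, Finset.sum_neg_distrib]
  simp only [kd7, mul_ite, mul_one, mul_zero, Finset.sum_ite_irrel, Finset.sum_ite_eq,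
    Finset.mem_univ, ↓reduceIte, Finset.sum_const_zero, Finset.sum_ite_eq', mul_comm (x l),
    mul_right_comm _ (x l), mul_right_comm _ (y l), Finset.sum_mul]
  ring

theorem inner_chi7 (x y z w : E7) : ⟪chi7 x y z, w⟫ = psi7 x y z w := by
  simp only [E7.inner_eq_sum, chi7_apply, psi7, Finset.sum_mul]
  calc _ = ∑ i, ∑ l, ∑ j, ∑ k, x i * y j * z k * psiC i j k l * w l := Finset.sum_comm
    _ = _ := Finset.sum_congr rfl fun i _ => by
      rw [← Finset.sum_comm_cycle]
      exact Finset.sum_congr rfl fun j _ => Finset.sum_congr rfl fun k _ =>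
        Finset.sum_congr rfl fun l _ => by ring

theorem psi7_swap01 (x y z w : E7) : psi7 y x z w = -psi7 x y z w := by
  simp only [psi7, ← Finset.sum_neg_distrib]
  rw [Finset.sum_comm]
  refine Finset.sum_congr rfl fun i _ => Finset.sum_congr rfl fun j _ =>
    Finset.sum_congr rfl fun k _ => Finset.sum_congr rfl fun l _ => ?_
  rw [psiC_swap01]; ring

theorem psi7_swap12 (x y z w : E7) : psi7 x z y w = -psi7 x y z w := by
  simp only [psi7, ← Finset.sum_neg_distrib]
  refine Finset.sum_congr rfl fun i _ => ?_
  rw [Finset.sum_comm]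
  refine Finset.sum_congr rfl fun j _ => Finset.sum_congr rfl fun k _ =>
    Finset.sum_congr rfl fun l _ => ?_
  rw [psiC_swap12]; ring

theorem psi7_swap23 (x y z w : E7) : psi7 x y w z = -psi7 x y z w := by
  simp only [psi7, ← Finset.sum_neg_distrib]
  refine Finset.sum_congr rfl fun i _ => Finset.sum_congr rfl fun j _ => ?_
  rw [Finset.sum_comm]
  refine Finset.sum_congr rfl fun k _ => Finset.sum_congr rfl fun l _ => ?_
  rw [psiC_swap23]; ring

def psi7Multilinear : MultilinearMap ℝ (fun _ : Fin 4 => E7) ℝ :=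
  ∑ i, ∑ j, ∑ k, ∑ l, psiC i j k l •
    (MultilinearMap.mkPiAlgebra ℝ (Fin 4) ℝ).compLinearMap
      ![EuclideanSpace.projₗ i, EuclideanSpace.projₗ j, EuclideanSpace.projₗ k,
        EuclideanSpace.projₗ l]

theorem psi7Multilinear_apply (v : Fin 4 → E7) :
    psi7Multilinear v = psi7 (v 0) (v 1) (v 2) (v 3) := by
  simp [psi7Multilinear, psi7, Fin.prod_univ_four, mul_comm]

def psi7Alternating : E7 [⋀^Fin 4]→ₗ[ℝ] ℝ :=
  psi7Multilinear.alternatingOfAdjacentSwap fun v i => by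
    rw [psi7Multilinear_apply, psi7Multilinear_apply]
    fin_cases i
    exacts [psi7_swap01 .., psi7_swap12 .., psi7_swap23 ..]

theorem psi7Alternating_apply (v : Fin 4 → E7) :
    psi7Alternating v = psi7 (v 0) (v 1) (v 2) (v 3) :=
  psi7Multilinear_apply v

theorem psi7_eq_zero_of_mem {W : Submodule ℝ E7} (hW : finrank ℝ W ≤ 3) {x y z w : E7}
    (hx : x ∈ W) (hy : y ∈ W) (hz : z ∈ W) (hw : w ∈ W) : psi7 x y z w = 0 := by
  have h := psi7Alternating.map_eq_zero_of_finrank_lt (v := ![x, y, z, w])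
    (by simpa using Nat.lt_succ_of_le hW) (fun i => by fin_cases i <;> assumption)
  simpa [psi7Alternating_apply] using h

theorem chi7_self_right (x z : E7) : chi7 x z z = 0 := by
  ext l
  exact self_eq_neg.mp (psi7_swap12 x z z (e7 l))

theorem mem_span_singleton_of_cross7_eq_zero {v z : E7} (hz : z ≠ 0) (h : cross7 v z = 0) :
    v ∈ ℝ ∙ z := by
  have hvz := chi7_self_right v z
  rw [chi7_eq, h, cross7_zero_left, sub_zero, sub_eq_zero] at hvz
  refine Submodule.mem_span_singleton.mpr ⟨⟪v, z⟫ / ⟪z, z⟫, ?_⟩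
  rw [div_eq_inv_mul, mul_smul, hvz, smul_smul, inv_mul_cancel₀ (inner_self_ne_zero.mpr hz),
    one_smul]

/-- Pointwise form of the remark following equation (2.14): a 3-dimensional subspace
`W ⊆ ℝ⁷` is closed under the cross product iff `χ` vanishes identically on `W`. -/
theorem assoc_iff_chi_vanishes (W : Submodule ℝ E7) (hW : Module.finrank ℝ W = 3) :
    (∀ x ∈ W, ∀ y ∈ W, cross7 x y ∈ W) ↔
    (∀ x ∈ W, ∀ y ∈ W, ∀ z ∈ W, chi7 x y z = 0) := by
  constructor
  · intro hcross x hx y hy z hz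
    have hχ : chi7 x y z ∈ W := by
      rw [chi7_eq]
      exact sub_mem (sub_mem (W.smul_mem _ hy) (W.smul_mem _ hx))
        (hcross _ (hcross x hx y hy) z hz)
    rw [← inner_self_eq_zero (𝕜 := ℝ), inner_chi7]
    exact psi7_eq_zero_of_mem hW.le hx hy hz hχ
  · intro hχ x hx y hy
    obtain ⟨z, hzW, hz0, hz⟩ :=
      W.exists_ne_zero_forall_inner_eq_zero (by simp [hW]) ![x, y]
    have hxz : ⟪x, z⟫ = 0 := hz 0
    have hyz : ⟪y, z⟫ = 0 := hz 1
    have hvz : cross7 (cross7 x y) z = 0 := by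
      simpa [chi7_eq, hxz, hyz] using hχ x hx y hy z hzW
    exact (Submodule.span_singleton_le_iff_mem z W).mpr hzW
      (mem_span_singleton_of_cross7_eq_zero hz0 hvz)
end
end
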